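/- arXiv:math/0601766 — 3 statements merged into one kernel-verified Lean document; each statement's English description precedes it below -/
import Mathlib

section
/- Suppose μ_t = μ₀ + t μ₁ + ... + t^{m−1} μ_{m−1} is a truncated formal deformation of the associative algebra (A, μ₀) satisfying the deformation equations up to order m−1. Then the obstruction term Ω_m(x,y,z) = Σ_{i=1}^{m−1} (μ_i(μ_{m−i}(x,y),z) − μ_i(x,μ_{m−i}(y,z))) is a Hochschild 3-cocycle: δΩ_m = 0. Consequently the truncated deformation extends to order m if and only if the class of Ω_m in H³(A,A) vanishes; in particular if H³(A,A) = 0 every truncated deformation extends. -/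
/-!
Write `S_k(x,y,z) = ∑_{i+j=k} (μ_i(μ_j(x,y),z) − μ_i(x,μ_j(y,z)))` for the `t^k`-coefficient of the
associator of `μ_t = ∑ tⁱ μ_i`. The associator of any bilinear multiplication satisfies the
Stasheff-type identity `x·a(y,z,w) − a(xy,z,w) + a(x,yz,w) − a(x,y,zw) + a(x,y,z)·w = 0`; its
`t^N`-coefficient reads `∑_{i+j=N} δ_{μ_i} S_j = 0`. If `S_k = 0` for `k < M`, only `δ_{μ₀} S_M`
survives at `N = M`. Replacing `μ_M` by `0` does not change `S_k` for `k < M` and turns `S_M` into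
`Ω_M`, so `δΩ_M = 0`.
-/

open Finset

theorem sum_antidiagonal_antidiagonal_rotate {β : Type*} [AddCommMonoid β] (N : ℕ)
    (f : ℕ → ℕ → ℕ → β) :
    ∑ t ∈ antidiagonal N, ∑ p ∈ antidiagonal t.2, f t.1 p.1 p.2
      = ∑ t ∈ antidiagonal N, ∑ p ∈ antidiagonal t.2, f p.1 p.2 t.1 := by
  rw [sum_sigma', sum_sigma']
  refine sum_nbij' (fun x => ⟨(x.2.2, x.1.1 + x.2.1), (x.1.1, x.2.1)⟩)
    (fun x => ⟨(x.2.1, x.2.2 + x.1.1), (x.2.2, x.1.1)⟩) ?_ ?_ ?_ ?_ ?_ <;>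
    rintro ⟨⟨a, b⟩, ⟨c, d⟩⟩ h <;>
    simp only [mem_sigma, HasAntidiagonal.mem_antidiagonal] at h ⊢ <;>
    obtain ⟨h1, h2⟩ := h
  · exact ⟨by omega, trivial⟩
  · exact ⟨by omega, trivial⟩
  · subst h2; rfl
  · subst h2; rfl

theorem sum_antidiagonal_sub_swap_eq_zero {β : Type*} [AddCommGroup β] (k : ℕ) (g : ℕ → ℕ → β) :
    ∑ p ∈ antidiagonal k, (g p.1 p.2 - g p.2 p.1) = 0 := by
  rw [sum_sub_distrib, sub_eq_zero]
  exact (Nat.sum_antidiagonal_swap (f := fun p => g p.1 p.2)).symm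

section Deformation

variable {R A : Type*} [CommSemiring R] [AddCommGroup A] [Module R A]

def gerstenhaberComp (φ ψ : A →ₗ[R] A →ₗ[R] A) (x y z : A) : A :=
  φ (ψ x y) z - φ x (ψ y z)

def associatorCoeff (m : ℕ → A →ₗ[R] A →ₗ[R] A) (k : ℕ) (x y z : A) : A :=
  ∑ p ∈ antidiagonal k, gerstenhaberComp (m p.1) (m p.2) x y z

def hochschildCoboundary₃ (μ : A →ₗ[R] A →ₗ[R] A) (T : A → A → A → A) (x y z w : A) : A :=
  μ x (T y z w) - T (μ x y) z w + T x (μ y z) w - T x y (μ z w) + μ (T x y z) w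

theorem sum_antidiagonal_hochschildCoboundary₃_associatorCoeff (m : ℕ → A →ₗ[R] A →ₗ[R] A)
    (N : ℕ) (x y z w : A) :
    ∑ t ∈ antidiagonal N,
      hochschildCoboundary₃ (m t.1) (associatorCoeff m t.2) x y z w = 0 := by
  -- `outer a b c`: the terms in which `μ_a` is applied last. After the rotation `(a,b,c) ↦ (b,c,a)`
  -- of the remaining terms, the two parts cancel up to a summand antisymmetric in `b, c`.
  set outer : ℕ → ℕ → ℕ → A := fun a b c =>
    m a x (m b (m c y z) w) - m a x (m b y (m c z w))
      + (m a (m b (m c x y) z) w - m a (m b x (m c y z)) w)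
  set inner : ℕ → ℕ → ℕ → A := fun a b c =>
    -(m a (m b (m c x y) z) w - m a (m c x y) (m b z w))
      + (m a (m b x (m c y z)) w - m a x (m b (m c y z) w))
      - (m a (m b x y) (m c z w) - m a x (m b y (m c z w)))
  have split : ∀ t : ℕ × ℕ, hochschildCoboundary₃ (m t.1) (associatorCoeff m t.2) x y z w
      = ∑ p ∈ antidiagonal t.2, outer t.1 p.1 p.2
        + ∑ p ∈ antidiagonal t.2, inner p.1 p.2 t.1 := by
    intro t
    simp only [hochschildCoboundary₃, associatorCoeff, gerstenhaberComp, outer, inner, map_sum,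
      map_sub, LinearMap.sum_apply, LinearMap.sub_apply, ← sum_add_distrib, ← sum_sub_distrib]
    exact sum_congr rfl fun p _ => by abel
  have cancel : ∀ a b c, outer a b c + inner a b c
      = m a (m c x y) (m b z w) - m a (m b x y) (m c z w) := fun a b c => by
    simp only [outer, inner]
    abel
  calc ∑ t ∈ antidiagonal N, hochschildCoboundary₃ (m t.1) (associatorCoeff m t.2) x y z w
      = ∑ t ∈ antidiagonal N, ∑ p ∈ antidiagonal t.2, outer t.1 p.1 p.2
          + ∑ t ∈ antidiagonal N, ∑ p ∈ antidiagonal t.2, inner p.1 p.2 t.1 := by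
        rw [sum_congr rfl fun t _ => split t, sum_add_distrib]
    _ = ∑ t ∈ antidiagonal N, ∑ p ∈ antidiagonal t.2, (outer t.1 p.1 p.2 + inner t.1 p.1 p.2) := by
        rw [← sum_antidiagonal_antidiagonal_rotate, ← sum_add_distrib]
        simp only [sum_add_distrib]
    _ = 0 := sum_eq_zero fun t _ => by
        simp only [cancel]
        exact sum_antidiagonal_sub_swap_eq_zero t.2 fun b c => m t.1 (m c x y) (m b z w)

theorem hochschildCoboundary₃_associatorCoeff_eq_zero (m : ℕ → A →ₗ[R] A →ₗ[R] A) (M : ℕ)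
    (hm : ∀ k < M, ∀ x y z, associatorCoeff m k x y z = 0) (x y z w : A) :
    hochschildCoboundary₃ (m 0) (associatorCoeff m M) x y z w = 0 := by
  rw [← sum_antidiagonal_hochschildCoboundary₃_associatorCoeff m M x y z w,
    sum_eq_single_of_mem (0, M) (by simp)]
  rintro ⟨a, b⟩ hab hne
  have hb : b < M := by
    rw [HasAntidiagonal.mem_antidiagonal] at hab
    have : a ≠ 0 := by rintro rfl; simp_all
    omega
  simp [hochschildCoboundary₃, hm b hb]

theorem associatorCoeff_update_of_lt (m : ℕ → A →ₗ[R] A →ₗ[R] A) {k M : ℕ} (hk : k < M)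
    (x y z : A) : associatorCoeff (Function.update m M 0) k x y z = associatorCoeff m k x y z := by
  refine sum_congr rfl fun p hp => ?_
  have := HasAntidiagonal.mem_antidiagonal.mp hp
  rw [Function.update_of_ne (by omega), Function.update_of_ne (by omega)]

theorem associatorCoeff_update_self (m : ℕ → A →ₗ[R] A →ₗ[R] A) (M : ℕ) (x y z : A) :
    associatorCoeff (Function.update m M 0) M x y z
      = ∑ i ∈ Ico 1 M, gerstenhaberComp (m i) (m (M - i)) x y z := by
  rw [associatorCoeff, Nat.sum_antidiagonal_eq_sum_range_succ_mk]
  symm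
  refine sum_subset_zero_on_sdiff (fun i hi => ?_) (fun i hi => ?_) (fun i hi => ?_) <;>
    simp only [mem_sdiff, mem_Ico, mem_range] at hi ⊢
  · omega
  · obtain rfl | rfl : i = 0 ∨ i = M := by omega
    all_goals simp [gerstenhaberComp]
  · rw [Function.update_of_ne (by omega), Function.update_of_ne (by omega)]

end Deformation

/-- For a truncated formal deformation `μ₀ + tμ₁ + ⋯ + t^{M-1}μ_{M-1}`
satisfying the deformation equations up to order `M-1`, the obstruction
`Ω_M = ∑_{i=1}^{M-1} μ_i ∘ μ_{M-i}` (packaged as the trilinear map `W`) is a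
Hochschild 3-cocycle; the deformation extends to order `M` iff `Ω_M` is a
3-coboundary; in particular if every 3-cocycle is a coboundary (`H³(A,A)=0`)
then the truncated deformation extends. -/
theorem stmt_8 {K A : Type*} [Field K] [AddCommGroup A] [Module K A]
    (m : ℕ → A →ₗ[K] A →ₗ[K] A) (M : ℕ) (hM : 1 ≤ M)
    (htrunc : ∀ k : ℕ, k < M → ∀ x y z : A,
      ∑ p ∈ Finset.HasAntidiagonal.antidiagonal k,
        (m p.1 (m p.2 x y) z - m p.1 x (m p.2 y z)) = 0)
    (W : A →ₗ[K] A →ₗ[K] A →ₗ[K] A)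
    (hW : ∀ x y z : A, W x y z =
      ∑ i ∈ Finset.Ico 1 M, (m i (m (M - i) x y) z - m i x (m (M - i) y z))) :
    (∀ x y z w : A,
      m 0 x (W y z w) - W (m 0 x y) z w + W x (m 0 y z) w
        - W x y (m 0 z w) + m 0 (W x y z) w = 0) ∧
    ((∃ μM : A →ₗ[K] A →ₗ[K] A, ∀ x y z : A,
        m 0 (μM x y) z - m 0 x (μM y z) + μM (m 0 x y) z - μM x (m 0 y z)
          + W x y z = 0) ↔
      (∃ ν : A →ₗ[K] A →ₗ[K] A, ∀ x y z : A,
        W x y z = m 0 x (ν y z) - ν (m 0 x y) z + ν x (m 0 y z) - m 0 (ν x y) z)) ∧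
    ((∀ T : A →ₗ[K] A →ₗ[K] A →ₗ[K] A,
        (∀ x y z w : A,
          m 0 x (T y z w) - T (m 0 x y) z w + T x (m 0 y z) w
            - T x y (m 0 z w) + m 0 (T x y z) w = 0) →
        ∃ ν : A →ₗ[K] A →ₗ[K] A, ∀ x y z : A,
          T x y z = m 0 x (ν y z) - ν (m 0 x y) z + ν x (m 0 y z) - m 0 (ν x y) z) →
      ∃ μM : A →ₗ[K] A →ₗ[K] A, ∀ x y z : A,
        m 0 (μM x y) z - m 0 x (μM y z) + μM (m 0 x y) z - μM x (m 0 y z)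
          + W x y z = 0) := by
  have hW' : (fun x y z => W x y z) = associatorCoeff (Function.update m M 0) M := by
    funext x y z
    rw [hW, associatorCoeff_update_self]
    rfl
  have cocycle : ∀ x y z w, hochschildCoboundary₃ (m 0) (fun a b c => W a b c) x y z w = 0 := by
    intro x y z w
    have h := hochschildCoboundary₃_associatorCoeff_eq_zero (Function.update m M 0) M
      (fun k hk a b c => (associatorCoeff_update_of_lt m hk a b c).trans (htrunc k hk a b c))
      x y z w
    rwa [← hW', Function.update_of_ne (by omega)] at h
  refine ⟨cocycle, ⟨fun ⟨μM, hμ⟩ => ⟨μM, fun x y z => ?_⟩, fun ⟨ν, hν⟩ => ⟨ν, fun x y z => ?_⟩⟩,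
    fun H => ?_⟩
  · rw [eq_neg_of_add_eq_zero_right (hμ x y z)]
    abel
  · rw [hν x y z]
    abel
  · obtain ⟨ν, hν⟩ := H W cocycle
    exact ⟨ν, fun x y z => by rw [hν x y z]; abel⟩
end

section
/- Define the squaring map Sq : H²(A,A) → H³(A,A) by Sq([φ]) = [φ∘φ], where (φ∘φ)(x,y,z) = φ(φ(x,y),z) − φ(x,φ(y,z)). If Sq is injective, then A is formally rigid: every formal deformation of A is equivalent to the trivial one. -/
/-- A formal one-parameter deformation of `m₀`, given by its coefficients. -/
def IsDeformationOf {K A : Type*} [Field K] [AddCommGroup A] [Module K A]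
    (m₀ : A →ₗ[K] A →ₗ[K] A) (m : ℕ → A →ₗ[K] A →ₗ[K] A) : Prop :=
  m 0 = m₀ ∧ ∀ (k : ℕ) (x y z : A),
    ∑ p ∈ Finset.HasAntidiagonal.antidiagonal k,
      (m p.1 (m p.2 x y) z - m p.1 x (m p.2 y z)) = 0

/-- Equivalence of formal deformations via `F_t = Id + t f₁ + ⋯`. -/
def AreEquivalentDeformations {K A : Type*} [Field K] [AddCommGroup A] [Module K A]
    (m m' : ℕ → A →ₗ[K] A →ₗ[K] A) : Prop :=
  ∃ F : ℕ → A →ₗ[K] A, F 0 = LinearMap.id ∧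
    ∀ (k : ℕ) (x y : A),
      ∑ p ∈ Finset.HasAntidiagonal.antidiagonal k, F p.1 (m p.2 x y) =
        ∑ p ∈ Finset.HasAntidiagonal.antidiagonal k, ∑ q ∈ Finset.HasAntidiagonal.antidiagonal p.2,
          m' p.1 (F q.1 x) (F q.2 y)

/-- The trivial deformation of `m₀`. -/
def TrivialDeformation {K A : Type*} [Field K] [AddCommGroup A] [Module K A]
    (m₀ : A →ₗ[K] A →ₗ[K] A) : ℕ → A →ₗ[K] A →ₗ[K] A :=
  fun k => if k = 0 then m₀ else 0

/-- A Hochschild 2-cocycle with respect to `m₀`. -/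
def IsTwoCocycle {K A : Type*} [Field K] [AddCommGroup A] [Module K A]
    (m₀ φ : A →ₗ[K] A →ₗ[K] A) : Prop :=
  ∀ x y z : A, m₀ x (φ y z) - φ (m₀ x y) z + φ x (m₀ y z) - m₀ (φ x y) z = 0

/-!
Conjugating a deformation `m_t` by an invertible `F_t = id + t F₁ + ⋯` gives again an associative
deformation. If its first correction beyond `m₀` sits in order `k`, associativity in orders `k`
and `2k` says that this correction `φ` is a 2-cocycle and that `φ ∘ φ` is a 3-coboundary.
Comparing with `Sq 0 = 0`, injectivity of `Sq` makes `φ = δg`, and adding `t^k g` to `F_t` kills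
the correction in order `k`. Choosing the coefficients of `F_t` this way, order by order, yields
an equivalence with the trivial deformation.
-/

open Finset PowerSeries

lemma sum_antidiagonal_eq_add_of_interior {M : Type*} [AddCommMonoid M] {k : ℕ} (hk : k ≠ 0)
    (f : ℕ × ℕ → M) (hf : ∀ i j, i + j = k → i ≠ 0 → j ≠ 0 → f (i, j) = 0) :
    ∑ p ∈ antidiagonal k, f p = f (0, k) + f (k, 0) := by
  rw [← sum_subset (s₁ := {(0, k), (k, 0)}), sum_pair (by simpa [eq_comm] using hk)]
  · intro p hp
    simp only [mem_insert, mem_singleton] at hp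
    rcases hp with rfl | rfl <;> simp
  · rintro ⟨i, j⟩ hij hne
    simp only [mem_insert, mem_singleton, Prod.mk.injEq, not_or] at hne
    rw [HasAntidiagonal.mem_antidiagonal] at hij
    exact hf i j hij (by omega) (by omega)

section Series
variable {R A : Type*} [CommRing R] [AddCommGroup A] [Module R A]

/-- A series in `A⟦t⟧` is modelled by its sequence of coefficients, on which a series `Φ` of
endomorphisms acts by the Cauchy product. -/
noncomputable def seriesMap (Φ : (Module.End R A)⟦X⟧) (u : ℕ → A) : ℕ → A :=
  fun k => ∑ p ∈ antidiagonal k, coeff p.1 Φ (u p.2)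

/-- The `R⟦t⟧`-bilinear product on `A⟦t⟧` defined by `m_t = ∑ m k t^k`. -/
def seriesMul (m : ℕ → A →ₗ[R] A →ₗ[R] A) (u v : ℕ → A) : ℕ → A :=
  fun k => ∑ p ∈ antidiagonal k, ∑ q ∈ antidiagonal p.2, m p.1 (u q.1) (v q.2)

lemma seriesMap_one (u : ℕ → A) : seriesMap (1 : (Module.End R A)⟦X⟧) u = u := by
  funext k
  rw [seriesMap, sum_eq_single (0, k)]
  · simp
  · rintro ⟨a, b⟩ hab hne
    have ha : a ≠ 0 := by rintro rfl; simp_all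
    simp [coeff_one, ha]
  · simp

lemma seriesMap_mul (Ψ Φ : (Module.End R A)⟦X⟧) (u : ℕ → A) :
    seriesMap (Ψ * Φ) u = seriesMap Ψ (seriesMap Φ u) := by
  funext k
  simp only [seriesMap, coeff_mul, LinearMap.sum_apply, Module.End.mul_apply, map_sum,
    sum_sigma']
  refine sum_nbij' (fun ⟨⟨_, i⟩, ⟨a, b⟩⟩ => ⟨(a, b + i), (b, i)⟩)
    (fun ⟨⟨a, _⟩, ⟨b, i⟩⟩ => ⟨(a + b, i), (a, b)⟩) ?_ ?_ ?_ ?_ ?_ <;>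
  rintro ⟨⟨a, b⟩, ⟨c, d⟩⟩ <;> simp <;> omega

lemma seriesMap_single (Φ : (Module.End R A)⟦X⟧) (x : A) :
    seriesMap Φ (Pi.single 0 x) = fun k => coeff k Φ x := by
  funext k
  rw [seriesMap, sum_eq_single (k, 0)]
  · simp
  · rintro ⟨a, b⟩ hab hne
    have hb : b ≠ 0 := by rintro rfl; simp_all
    simp [hb]
  · simp

lemma seriesMul_single_right (m : ℕ → A →ₗ[R] A →ₗ[R] A) (u : ℕ → A) (z : A) (k : ℕ) :
    seriesMul m u (Pi.single 0 z) k = ∑ p ∈ antidiagonal k, m p.1 (u p.2) z := by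
  refine sum_congr rfl fun p _ => ?_
  rw [sum_eq_single (p.2, 0)]
  · simp
  · rintro ⟨a, b⟩ hab hne
    have hb : b ≠ 0 := by rintro rfl; simp_all
    simp [hb]
  · simp

lemma seriesMul_single_left (m : ℕ → A →ₗ[R] A →ₗ[R] A) (x : A) (v : ℕ → A) (k : ℕ) :
    seriesMul m (Pi.single 0 x) v k = ∑ p ∈ antidiagonal k, m p.1 x (v p.2) := by
  refine sum_congr rfl fun p _ => ?_
  rw [sum_eq_single (0, p.2)]
  · simp
  · rintro ⟨a, b⟩ hab hne
    have ha : a ≠ 0 := by rintro rfl; simp_all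
    simp [ha]
  · simp

lemma seriesMul_single_single (m : ℕ → A →ₗ[R] A →ₗ[R] A) (x y : A) :
    seriesMul m (Pi.single 0 x) (Pi.single 0 y) = fun k => m k x y := by
  funext k
  rw [seriesMul_single_left, sum_eq_single (k, 0)]
  · simp
  · rintro ⟨a, b⟩ hab hne
    have hb : b ≠ 0 := by rintro rfl; simp_all
    simp [hb]
  · simp

lemma seriesMul_assoc (m : ℕ → A →ₗ[R] A →ₗ[R] A)
    (hm : ∀ (k : ℕ) (x y z : A),
      ∑ p ∈ antidiagonal k, (m p.1 (m p.2 x y) z - m p.1 x (m p.2 y z)) = 0)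
    (u v w : ℕ → A) :
    seriesMul m (seriesMul m u v) w = seriesMul m u (seriesMul m v w) := by
  funext k
  calc seriesMul m (seriesMul m u v) w k
      = ∑ p ∈ antidiagonal k, ∑ q ∈ antidiagonal p.2, ∑ r ∈ antidiagonal q.2,
          ∑ s ∈ antidiagonal p.1, m s.1 (m s.2 (u q.1) (v r.1)) (w r.2) := by
        simp only [seriesMul, map_sum, LinearMap.sum_apply, sum_sigma']
        refine sum_nbij' (fun ⟨⟨a, _⟩, ⟨_, l⟩, ⟨b, _⟩, ⟨i, j⟩⟩ =>
            ⟨(a + b, i + j + l), (i, j + l), (j, l), (a, b)⟩)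
          (fun ⟨_, ⟨i, _⟩, ⟨j, l⟩, ⟨a, b⟩⟩ =>
            ⟨(a, b + i + j + l), (b + i + j, l), (b, i + j), (i, j)⟩) ?_ ?_ ?_ ?_ ?_ <;>
        rintro ⟨⟨a, b⟩, ⟨c, d⟩, ⟨e, f⟩, ⟨g, h⟩⟩ <;> simp <;> omega
    _ = ∑ p ∈ antidiagonal k, ∑ q ∈ antidiagonal p.2, ∑ r ∈ antidiagonal q.2,
          ∑ s ∈ antidiagonal p.1, m s.1 (u q.1) (m s.2 (v r.1) (w r.2)) := by
        refine sum_congr rfl fun p _ => sum_congr rfl fun q _ => sum_congr rfl fun r _ => ?_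
        rw [← sub_eq_zero, ← sum_sub_distrib, hm]
    _ = seriesMul m u (seriesMul m v w) k := by
        simp only [seriesMul, map_sum, sum_sigma']
        refine sum_nbij' (fun ⟨_, ⟨i, _⟩, ⟨j, l⟩, ⟨a, b⟩⟩ =>
            ⟨(a, i + b + j + l), (i, b + j + l), (b, j + l), (j, l)⟩)
          (fun ⟨⟨a, _⟩, ⟨i, _⟩, ⟨b, _⟩, ⟨j, l⟩⟩ =>
            ⟨(a + b, i + j + l), (i, j + l), (j, l), (a, b)⟩) ?_ ?_ ?_ ?_ ?_ <;>
        rintro ⟨⟨a, b⟩, ⟨c, d⟩, ⟨e, f⟩, ⟨g, h⟩⟩ <;> simp <;> omega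

/-- The deformation `Φ ∘ m_t ∘ (Φ⁻¹ ⊗ Φ⁻¹)`, meaningful when `Φ` has constant coefficient `1`. -/
noncomputable def pushforward (Φ : (Module.End R A)⟦X⟧) (m : ℕ → A →ₗ[R] A →ₗ[R] A) (k : ℕ) :
    A →ₗ[R] A →ₗ[R] A :=
  ∑ p ∈ antidiagonal k, ∑ q ∈ antidiagonal p.2, ∑ r ∈ antidiagonal q.2,
    ((m q.1).compl₁₂ (coeff r.1 (Φ.invOfUnit 1)) (coeff r.2 (Φ.invOfUnit 1))).compr₂
      (coeff p.1 Φ)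

lemma pushforward_apply (Φ : (Module.End R A)⟦X⟧) (m : ℕ → A →ₗ[R] A →ₗ[R] A) (k : ℕ)
    (x y : A) :
    pushforward Φ m k x y = ∑ p ∈ antidiagonal k, ∑ q ∈ antidiagonal p.2,
      ∑ r ∈ antidiagonal q.2,
        coeff p.1 Φ (m q.1 (coeff r.1 (Φ.invOfUnit 1) x) (coeff r.2 (Φ.invOfUnit 1) y)) := by
  simp [pushforward, LinearMap.sum_apply]

lemma seriesMul_pushforward (Φ : (Module.End R A)⟦X⟧) (m : ℕ → A →ₗ[R] A →ₗ[R] A)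
    (u v : ℕ → A) :
    seriesMul (pushforward Φ m) u v =
      seriesMap Φ (seriesMul m (seriesMap (Φ.invOfUnit 1) u) (seriesMap (Φ.invOfUnit 1) v)) := by
  funext k
  simp only [seriesMul, pushforward_apply, seriesMap, map_sum, LinearMap.sum_apply, sum_sigma']
  refine sum_nbij'
    (fun ⟨_, ⟨i, j⟩, ⟨α, _⟩, ⟨μ, _⟩, ⟨β, γ⟩⟩ =>
      ⟨(α, μ + β + γ + i + j), (μ, β + γ + i + j), (β + i, γ + j), (γ, j), (β, i)⟩)
    (fun ⟨⟨α, _⟩, ⟨μ, _⟩, _, ⟨γ, j⟩, ⟨β, i⟩⟩ =>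
      ⟨(α + μ + β + γ, i + j), (i, j), (α, μ + β + γ), (μ, β + γ), (β, γ)⟩) ?_ ?_ ?_ ?_ ?_ <;>
  rintro ⟨⟨a, b⟩, ⟨c, d⟩, ⟨e, f⟩, ⟨g, h⟩, ⟨i, j⟩⟩ <;> simp <;> omega

variable {Φ : (Module.End R A)⟦X⟧} {m : ℕ → A →ₗ[R] A →ₗ[R] A}

lemma invOfUnit_mul_eq_one (hΦ : constantCoeff Φ = 1) : Φ.invOfUnit 1 * Φ = 1 :=
  invOfUnit_mul Φ 1 (by rw [hΦ, Units.val_one])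

lemma pushforward_zero (hΦ : constantCoeff Φ = 1) : pushforward Φ m 0 = m 0 := by
  ext x y
  simp [pushforward_apply, coeff_zero_eq_constantCoeff_apply, hΦ, constantCoeff_invOfUnit]

lemma seriesMul_pushforward_seriesMap (hΦ : constantCoeff Φ = 1) (u v : ℕ → A) :
    seriesMul (pushforward Φ m) (seriesMap Φ u) (seriesMap Φ v) =
      seriesMap Φ (seriesMul m u v) := by
  rw [seriesMul_pushforward, ← seriesMap_mul, ← seriesMap_mul, invOfUnit_mul_eq_one hΦ,
    seriesMap_one, seriesMap_one]

lemma seriesMul_pushforward_assoc (hΦ : constantCoeff Φ = 1)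
    (hm : ∀ (k : ℕ) (x y z : A),
      ∑ p ∈ antidiagonal k, (m p.1 (m p.2 x y) z - m p.1 x (m p.2 y z)) = 0)
    (u v w : ℕ → A) :
    seriesMul (pushforward Φ m) (seriesMul (pushforward Φ m) u v) w =
      seriesMul (pushforward Φ m) u (seriesMul (pushforward Φ m) v w) := by
  simp only [seriesMul_pushforward Φ m, ← seriesMap_mul, invOfUnit_mul_eq_one hΦ, seriesMap_one,
    seriesMul_assoc m hm]

end Series

section Deformation
variable {K A : Type*} [Field K] [AddCommGroup A] [Module K A]
variable {m₀ : A →ₗ[K] A →ₗ[K] A} {m : ℕ → A →ₗ[K] A →ₗ[K] A}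

def IsTwoCoboundary (m₀ φ : A →ₗ[K] A →ₗ[K] A) : Prop :=
  ∃ g : A →ₗ[K] A, ∀ x y : A, φ x y = m₀ x (g y) - g (m₀ x y) + m₀ (g x) y

def IsThreeCoboundary (m₀ : A →ₗ[K] A →ₗ[K] A) (c : A → A → A → A) : Prop :=
  ∃ ν : A →ₗ[K] A →ₗ[K] A, ∀ x y z : A,
    c x y z = m₀ x (ν y z) - ν (m₀ x y) z + ν x (m₀ y z) - m₀ (ν x y) z

def gerstenhaberSq (φ : A →ₗ[K] A →ₗ[K] A) : A → A → A → A :=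
  fun x y z => φ (φ x y) z - φ x (φ y z)

lemma IsDeformationOf.pushforward {Φ : (Module.End K A)⟦X⟧} (hm : IsDeformationOf m₀ m)
    (hΦ : constantCoeff Φ = 1) : IsDeformationOf m₀ (pushforward Φ m) := by
  refine ⟨(pushforward_zero hΦ).trans hm.1, fun k x y z => ?_⟩
  have h := congrFun (seriesMul_pushforward_assoc hΦ hm.2
    (Pi.single 0 x) (Pi.single 0 y) (Pi.single 0 z)) k
  rw [seriesMul_single_single, seriesMul_single_single, seriesMul_single_right,
    seriesMul_single_left] at h
  rw [sum_sub_distrib, h, sub_self]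

lemma IsDeformationOf.isTwoCocycle_of_lowest (hm : IsDeformationOf m₀ m) {k : ℕ} (hk : k ≠ 0)
    (hlow : ∀ j, j ≠ 0 → j < k → m j = 0) : IsTwoCocycle m₀ (m k) := by
  intro x y z
  have h := hm.2 k x y z
  rw [sum_antidiagonal_eq_add_of_interior hk] at h
  · rw [hm.1] at h
    rw [← neg_eq_zero, ← h]
    abel
  · intro i j hij hi _
    simp [hlow i hi (by omega)]

lemma IsDeformationOf.isThreeCoboundary_gerstenhaberSq_of_lowest (hm : IsDeformationOf m₀ m)
    {k : ℕ} (hk : k ≠ 0) (hlow : ∀ j, j ≠ 0 → j < k → m j = 0) :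
    IsThreeCoboundary m₀ (gerstenhaberSq (m k)) := by
  refine ⟨m (k + k), fun x y z => ?_⟩
  have h := hm.2 (k + k) x y z
  rw [← sum_subset (s₁ := {(0, k + k), (k, k), (k + k, 0)})] at h
  · rw [sum_insert (by simp; omega), sum_pair (by simp; omega), hm.1] at h
    rw [gerstenhaberSq, ← sub_eq_zero, ← h]
    abel
  · intro p hp
    simp only [mem_insert, mem_singleton] at hp
    rcases hp with rfl | rfl | rfl <;> simp
  · rintro ⟨i, j⟩ hij hne
    simp only [mem_insert, mem_singleton, Prod.mk.injEq, not_or] at hne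
    rw [HasAntidiagonal.mem_antidiagonal] at hij
    rcases lt_or_ge i k with hi | hi
    · simp [hlow i (by omega) hi]
    · simp [hlow j (by omega) (by omega)]

/-- The order-`k` coefficient of `F_t ∘ m_t - m₀ ∘ (F_t ⊗ F_t)`; `F_t` is an equivalence from `m_t`
to the trivial deformation exactly when all of them vanish. -/
noncomputable def defect (m₀ : A →ₗ[K] A →ₗ[K] A) (m : ℕ → A →ₗ[K] A →ₗ[K] A)
    (F : ℕ → A →ₗ[K] A) (k : ℕ) : A →ₗ[K] A →ₗ[K] A :=
  ∑ p ∈ antidiagonal k, (m p.2).compr₂ (F p.1) - ∑ p ∈ antidiagonal k, m₀.compl₁₂ (F p.1) (F p.2)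

lemma defect_apply (F : ℕ → A →ₗ[K] A) (k : ℕ) (x y : A) :
    defect m₀ m F k x y =
      ∑ p ∈ antidiagonal k, F p.1 (m p.2 x y) - ∑ p ∈ antidiagonal k, m₀ (F p.1 x) (F p.2 y) := by
  simp [defect, LinearMap.sum_apply]

lemma defect_congr {F F' : ℕ → A →ₗ[K] A} {k : ℕ} (h : ∀ i ≤ k, F i = F' i) :
    defect m₀ m F k = defect m₀ m F' k := by
  ext x y
  simp only [defect_apply]
  congr 1 <;> refine sum_congr rfl fun p hp => ?_ <;>
    rw [HasAntidiagonal.mem_antidiagonal] at hp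
  · rw [h p.1 (by omega)]
  · rw [h p.1 (by omega), h p.2 (by omega)]

lemma defect_eq_sub_coboundary (hm0 : m 0 = m₀) {F F' : ℕ → A →ₗ[K] A} {k : ℕ} (hk : k ≠ 0)
    (hF0 : F 0 = LinearMap.id) (h : ∀ i < k, F' i = F i) (hF'k : F' k = 0) (x y : A) :
    defect m₀ m F k x y =
      defect m₀ m F' k x y - (m₀ x (F k y) - F k (m₀ x y) + m₀ (F k x) y) := by
  have hF'0 : F' 0 = LinearMap.id := (h 0 (Nat.pos_of_ne_zero hk)).trans hF0
  have h1 : ∑ p ∈ antidiagonal k, F p.1 (m p.2 x y) =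
      ∑ p ∈ antidiagonal k, F' p.1 (m p.2 x y) + F k (m₀ x y) := by
    rw [← sub_eq_iff_eq_add', ← sum_sub_distrib, sum_antidiagonal_eq_add_of_interior hk]
    · simp [hF0, hF'0, hF'k, hm0]
    · intro i j hij _ hj
      simp [h i (by omega)]
  have h2 : ∑ p ∈ antidiagonal k, m₀ (F p.1 x) (F p.2 y) =
      ∑ p ∈ antidiagonal k, m₀ (F' p.1 x) (F' p.2 y) + (m₀ x (F k y) + m₀ (F k x) y) := by
    rw [← sub_eq_iff_eq_add', ← sum_sub_distrib, sum_antidiagonal_eq_add_of_interior hk]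
    · simp [hF0, hF'0, hF'k]
    · intro i j hij hi hj
      simp [h i (by omega), h j (by omega)]
  rw [defect_apply, defect_apply, h1, h2]
  abel

lemma constantCoeff_mk_eq_one {F : ℕ → A →ₗ[K] A} (hF0 : F 0 = LinearMap.id) :
    constantCoeff (mk F) = 1 := by
  rw [constantCoeff_mk, hF0, Module.End.one_eq_id]

lemma pushforward_mk_eq_defect (hm0 : m 0 = m₀) {F : ℕ → A →ₗ[K] A} (hF0 : F 0 = LinearMap.id)
    {k : ℕ} (hk : k ≠ 0) (hlow : ∀ j, j ≠ 0 → j < k → pushforward (mk F) m j = 0) :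
    pushforward (mk F) m k = defect m₀ m F k := by
  ext x y
  have h := congrFun (seriesMul_pushforward_seriesMap (m := m) (constantCoeff_mk_eq_one hF0)
    (Pi.single 0 x) (Pi.single 0 y)) k
  rw [seriesMap_single, seriesMap_single, seriesMul_single_single] at h
  simp only [seriesMul, seriesMap, coeff_mk] at h
  rw [sum_antidiagonal_eq_add_of_interior hk] at h
  · rw [defect_apply, ← h, pushforward_zero (constantCoeff_mk_eq_one hF0), hm0]
    simp [hF0]
  · intro i j hij hi _
    simp [hlow i hi (by omega)]

lemma pushforward_mk_eq_zero (hm0 : m 0 = m₀) {F : ℕ → A →ₗ[K] A} (hF0 : F 0 = LinearMap.id)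
    {k : ℕ} (hD : ∀ j, j ≠ 0 → j < k → defect m₀ m F j = 0) :
    ∀ j, j ≠ 0 → j < k → pushforward (mk F) m j = 0 := by
  intro j
  induction j using Nat.strong_induction_on with
  | _ j ih =>
    intro hj hjk
    rw [pushforward_mk_eq_defect hm0 hF0 hj fun i hi hij => ih i hij hi (hij.trans hjk),
      hD j hj hjk]

lemma isTwoCoboundary_defect
    (hSq : ∀ φ : A →ₗ[K] A →ₗ[K] A, IsTwoCocycle m₀ φ →
      IsThreeCoboundary m₀ (gerstenhaberSq φ) → IsTwoCoboundary m₀ φ)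
    (hm : IsDeformationOf m₀ m) {F : ℕ → A →ₗ[K] A} (hF0 : F 0 = LinearMap.id) {k : ℕ}
    (hk : k ≠ 0) (hD : ∀ j, j ≠ 0 → j < k → defect m₀ m F j = 0) :
    IsTwoCoboundary m₀ (defect m₀ m F k) := by
  have hm' := hm.pushforward (constantCoeff_mk_eq_one hF0)
  have hlow := pushforward_mk_eq_zero hm.1 hF0 hD
  rw [← pushforward_mk_eq_defect hm.1 hF0 hk hlow]
  exact hSq _ (hm'.isTwoCocycle_of_lowest hk hlow)
    (hm'.isThreeCoboundary_gerstenhaberSq_of_lowest hk hlow)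

open scoped Classical in
/-- The equivalence to the trivial deformation, built order by order: the coefficient in order `k`
is some `g` whose coboundary is the defect in order `k` of the coefficients below `k`. -/
noncomputable def trivializingMap (m₀ : A →ₗ[K] A →ₗ[K] A) (m : ℕ → A →ₗ[K] A →ₗ[K] A) :
    ℕ → A →ₗ[K] A
  | 0 => LinearMap.id
  | k + 1 =>
    if h : IsTwoCoboundary m₀
        (defect m₀ m (fun j => if _ : j < k + 1 then trivializingMap m₀ m j else 0) (k + 1))
    then h.choose else 0

lemma trivializingMap_zero : trivializingMap m₀ m 0 = LinearMap.id := by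
  rw [trivializingMap]

lemma defect_truncation_trivializingMap {k : ℕ} (hk : k ≠ 0)
    (h : IsTwoCoboundary m₀ (defect m₀ m (fun j => if j < k then trivializingMap m₀ m j else 0) k))
    (x y : A) :
    defect m₀ m (fun j => if j < k then trivializingMap m₀ m j else 0) k x y =
      m₀ x (trivializingMap m₀ m k y) - trivializingMap m₀ m k (m₀ x y) +
        m₀ (trivializingMap m₀ m k x) y := by
  obtain ⟨k, rfl⟩ : ∃ n, k = n + 1 := ⟨k - 1, by omega⟩
  rw [trivializingMap]
  simp only [dite_eq_ite]
  rw [dif_pos h]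
  exact h.choose_spec x y

lemma defect_trivializingMap_eq_zero
    (hSq : ∀ φ : A →ₗ[K] A →ₗ[K] A, IsTwoCocycle m₀ φ →
      IsThreeCoboundary m₀ (gerstenhaberSq φ) → IsTwoCoboundary m₀ φ)
    (hm : IsDeformationOf m₀ m) (k : ℕ) : defect m₀ m (trivializingMap m₀ m) k = 0 := by
  induction k using Nat.strong_induction_on with
  | _ k ih =>
    rcases eq_or_ne k 0 with rfl | hk
    · ext x y
      simp [defect_apply, trivializingMap_zero, hm.1]
    set T : ℕ → A →ₗ[K] A := fun j => if j < k then trivializingMap m₀ m j else 0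
    have hT0 : T 0 = LinearMap.id := by simp [T, Nat.pos_of_ne_zero hk, trivializingMap_zero]
    have hTD : ∀ j, j ≠ 0 → j < k → defect m₀ m T j = 0 := fun j _ hjk =>
      (defect_congr fun i hi => if_pos (by omega)).trans (ih j hjk)
    ext x y
    rw [defect_eq_sub_coboundary hm.1 hk trivializingMap_zero (F' := T) (fun i hi => if_pos hi)
      (if_neg (lt_irrefl k)) x y,
      defect_truncation_trivializingMap hk (isTwoCoboundary_defect hSq hm hT0 hk hTD)]
    simp

lemma areEquivalentDeformations_trivialDeformation {F : ℕ → A →ₗ[K] A}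
    (hF0 : F 0 = LinearMap.id) (hD : ∀ k, defect m₀ m F k = 0) :
    AreEquivalentDeformations m (TrivialDeformation m₀) := by
  refine ⟨F, hF0, fun k x y => ?_⟩
  have h : defect m₀ m F k x y = 0 := by rw [hD k]; rfl
  rw [defect_apply, sub_eq_zero] at h
  rw [h, eq_comm, sum_eq_single (0, k)]
  · simp [TrivialDeformation]
  · rintro ⟨a, b⟩ _ hne
    have ha : a ≠ 0 := by rintro rfl; simp_all
    simp [TrivialDeformation, ha]
  · simp

end Deformation

theorem stmt_11_general {K A : Type*} [Field K] [AddCommGroup A] [Module K A]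
    (m₀ : A →ₗ[K] A →ₗ[K] A)
    (hSq : ∀ φ ψ : A →ₗ[K] A →ₗ[K] A, IsTwoCocycle m₀ φ → IsTwoCocycle m₀ ψ →
      (∃ ν : A →ₗ[K] A →ₗ[K] A, ∀ x y z : A,
        (φ (φ x y) z - φ x (φ y z)) - (ψ (ψ x y) z - ψ x (ψ y z)) =
          m₀ x (ν y z) - ν (m₀ x y) z + ν x (m₀ y z) - m₀ (ν x y) z) →
      ∃ g : A →ₗ[K] A, ∀ x y : A,
        φ x y - ψ x y = m₀ x (g y) - g (m₀ x y) + m₀ (g x) y) :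
    ∀ m : ℕ → A →ₗ[K] A →ₗ[K] A, IsDeformationOf m₀ m →
      AreEquivalentDeformations m (TrivialDeformation m₀) := by
  intro m hm
  have hSq' : ∀ φ : A →ₗ[K] A →ₗ[K] A, IsTwoCocycle m₀ φ →
      IsThreeCoboundary m₀ (gerstenhaberSq φ) → IsTwoCoboundary m₀ φ := by
    rintro φ hφ ⟨ν, hν⟩
    obtain ⟨g, hg⟩ := hSq φ 0 hφ (fun x y z => by simp)
      ⟨ν, fun x y z => by simpa [gerstenhaberSq] using hν x y z⟩
    exact ⟨g, fun x y => by simpa using hg x y⟩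
  exact areEquivalentDeformations_trivialDeformation trivializingMap_zero
    (defect_trivializingMap_eq_zero hSq' hm)

/-- If the squaring map `Sq : H²(A,A) → H³(A,A)`, `[φ] ↦ [φ∘φ]`, is
injective, then `A` is formally rigid: every formal deformation of `A` is
equivalent to the trivial one. Injectivity of `Sq` is expressed on cocycle
representatives: if `φ∘φ` and `ψ∘ψ` differ by a 3-coboundary then `φ` and `ψ`
differ by a 2-coboundary. -/
theorem stmt_11 {K A : Type*} [Field K] [CharZero K] [AddCommGroup A] [Module K A]
    (m₀ : A →ₗ[K] A →ₗ[K] A)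
    (hassoc : ∀ x y z : A, m₀ (m₀ x y) z = m₀ x (m₀ y z))
    (hSq : ∀ φ ψ : A →ₗ[K] A →ₗ[K] A, IsTwoCocycle m₀ φ → IsTwoCocycle m₀ ψ →
      (∃ ν : A →ₗ[K] A →ₗ[K] A, ∀ x y z : A,
        (φ (φ x y) z - φ x (φ y z)) - (ψ (ψ x y) z - ψ x (ψ y z)) =
          m₀ x (ν y z) - ν (m₀ x y) z + ν x (m₀ y z) - m₀ (ν x y) z) →
      ∃ g : A →ₗ[K] A, ∀ x y : A,
        φ x y - ψ x y = m₀ x (g y) - g (m₀ x y) + m₀ (g x) y) :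
    ∀ m : ℕ → A →ₗ[K] A →ₗ[K] A, IsDeformationOf m₀ m →
      AreEquivalentDeformations m (TrivialDeformation m₀) :=
  stmt_11_general m₀ hSq
end

section
/- Let V be a finite-dimensional vector space, μ : V×V → V a bilinear associative multiplication, and φ : V → V a linear map with Fitting decomposition V = V_R ⊕ V_N where φ is invertible on V_R and nilpotent on V_N (say φ^q = 0 on V_N). Write μ_N(x,y) for the V_N-component of μ(x,y). For f_t = φ + t·id, the limit of f_t⁻¹ ∘ μ ∘ (f_t × f_t) as t → 0 exists if and only if φ² ∘ μ_N − φ ∘ μ_N ∘ (φ × id) − φ ∘ μ_N ∘ (id × φ) + μ_N ∘ (φ × φ) = 0; and when it exists, the limit multiplication equals μ₀ = φ⁻¹ ∘ μ_R ∘ (φ × φ) + μ_N ∘ (φ × id) + μ_N ∘ (id × φ) − φ ∘ μ_N, where μ_R is the V_R-component of μ. -/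
open Filter Topology

private lemma aux_inv_limit {V : Type*} [NormedAddCommGroup V] [NormedSpace ℝ V] :
    ∀ (q : ℕ) (a : ℕ → V) (e : V),
      Tendsto (fun t : ℝ => ∑ i ∈ Finset.range q, (t⁻¹) ^ (i + 1) • a i)
        (𝓝[≠] (0 : ℝ)) (𝓝 e) → ∀ i < q, a i = 0 := by
  intro q
  induction q with
  | zero => intro a e _ i hi; omega
  | succ q ih =>
    intro a e h
    have hq : a q = 0 := by
      have h1 : Tendsto (fun t : ℝ => t ^ (q+1) • ∑ i ∈ Finset.range (q+1), (t⁻¹) ^ (i+1) • a i)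
          (𝓝[≠] (0:ℝ)) (𝓝 ((0:ℝ) • e)) := by
        refine Tendsto.smul ?_ h
        have : Tendsto (fun t : ℝ => t ^ (q+1)) (𝓝 (0:ℝ)) (𝓝 ((0:ℝ)^(q+1))) :=
          (continuous_pow (q+1)).continuousAt
        simpa [zero_pow] using this.mono_left nhdsWithin_le_nhds
      have heq : ∀ᶠ t : ℝ in 𝓝[≠] (0:ℝ),
          t ^ (q+1) • ∑ i ∈ Finset.range (q+1), (t⁻¹) ^ (i+1) • a i
            = ∑ i ∈ Finset.range (q+1), t ^ (q - i) • a i := by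
        filter_upwards [self_mem_nhdsWithin] with t ht
        have ht : t ≠ 0 := ht
        rw [Finset.smul_sum]
        refine Finset.sum_congr rfl fun i hi => ?_
        rw [Finset.mem_range] at hi
        rw [smul_smul]
        congr 1
        have h' : q + 1 = (q - i) + (i + 1) := by omega
        rw [h', pow_add, mul_assoc, inv_pow, mul_inv_cancel₀ (pow_ne_zero _ ht), mul_one]
      have h1' : Tendsto (fun t : ℝ => ∑ i ∈ Finset.range (q+1), t ^ (q - i) • a i)
          (𝓝[≠] (0:ℝ)) (𝓝 (0:V)) := by
        have := h1.congr' heq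
        simpa using this
      have h2 : Tendsto (fun t : ℝ => ∑ i ∈ Finset.range (q+1), t ^ (q - i) • a i)
          (𝓝[≠] (0:ℝ)) (𝓝 (a q)) := by
        have hc : Continuous (fun t : ℝ => ∑ i ∈ Finset.range (q+1), t ^ (q-i) • a i) := by
          refine continuous_finset_sum _ fun i _ => ?_
          exact (continuous_pow (q-i)).smul continuous_const
        have h0 : (∑ i ∈ Finset.range (q+1), (0:ℝ) ^ (q-i) • a i) = a q := by
          rw [Finset.sum_range_succ]
          have : ∑ i ∈ Finset.range q, (0:ℝ) ^ (q-i) • a i = 0 := by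
            refine Finset.sum_eq_zero fun i hi => ?_
            rw [Finset.mem_range] at hi
            rw [zero_pow (by omega), zero_smul]
          simp [this]
        have h3 : Tendsto (fun t : ℝ => ∑ i ∈ Finset.range (q+1), t ^ (q-i) • a i)
            (𝓝[≠] (0:ℝ)) (𝓝 (∑ i ∈ Finset.range (q+1), (0:ℝ) ^ (q-i) • a i)) :=
          (hc.continuousAt (x := (0:ℝ))).tendsto.mono_left nhdsWithin_le_nhds
        rwa [h0] at h3
      have := tendsto_nhds_unique h1' h2
      exact this.symm
    have h' : Tendsto (fun t : ℝ => ∑ i ∈ Finset.range q, (t⁻¹) ^ (i+1) • a i)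
        (𝓝[≠] (0:ℝ)) (𝓝 e) := by
      have : ∀ t : ℝ, ∑ i ∈ Finset.range (q+1), (t⁻¹) ^ (i+1) • a i
          = ∑ i ∈ Finset.range q, (t⁻¹) ^ (i+1) • a i := by
        intro t; rw [Finset.sum_range_succ, hq, smul_zero, add_zero]
      exact Tendsto.congr this h
    intro i hi
    rcases Nat.lt_succ_iff_lt_or_eq.1 hi with h'' | h''
    · exact ih a e h' i h''
    · subst h''; exact hq


set_option maxHeartbeats 2000000 in
/-- Degenerations along `f_t = φ + t·id`, where `φ` has Fitting decomposition
`V = V_R ⊕ V_N` (invertible on `V_R`, nilpotent on `V_N`).  The limit of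
`f_t⁻¹ ∘ μ ∘ (f_t × f_t)` as `t → 0` exists iff
`φ²∘μ_N − φ∘μ_N∘(φ×id) − φ∘μ_N∘(id×φ) + μ_N∘(φ×φ) = 0`, and in that case the
limit multiplication is
`μ₀ = φ⁻¹∘μ_R∘(φ×φ) + μ_N∘(φ×id) + μ_N∘(id×φ) − φ∘μ_N`.
Here `pR, pN` are the projections onto `V_R, V_N` and `ψ` is the inverse of
`φ` on `V_R`. -/
theorem stmt_15 {V : Type*} [NormedAddCommGroup V] [NormedSpace ℝ V]
    [FiniteDimensional ℝ V]
    (μ : V →ₗ[ℝ] V →ₗ[ℝ] V)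
    (hassoc : ∀ x y z : V, μ (μ x y) z = μ x (μ y z))
    (VR VN : Submodule ℝ V) (hcompl : IsCompl VR VN)
    (φ : V →ₗ[ℝ] V) (hsing : ¬ Function.Bijective φ)
    (hφR : ∀ v ∈ VR, φ v ∈ VR) (hφN : ∀ v ∈ VN, φ v ∈ VN)
    (hbijR : ∀ w ∈ VR, ∃! v, v ∈ VR ∧ φ v = w)
    (q : ℕ) (hnil : ∀ v ∈ VN, (φ ^ q) v = 0)
    (pR pN : V →ₗ[ℝ] V)
    (hpR : ∀ v ∈ VR, pR v = v) (hpR0 : ∀ v ∈ VN, pR v = 0)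
    (hpN : ∀ v ∈ VN, pN v = v) (hpN0 : ∀ v ∈ VR, pN v = 0)
    (ψ : V →ₗ[ℝ] V) (hψ : ∀ w ∈ VR, ψ w ∈ VR ∧ φ (ψ w) = w) :
    ((∃ L : V → V → V, ∀ x y : V,
        Tendsto (fun t : ℝ =>
            (Ring.inverse (φ + t • (1 : Module.End ℝ V)))
              (μ (φ x + t • x) (φ y + t • y)))
          (𝓝[≠] (0 : ℝ)) (𝓝 (L x y))) ↔
      (∀ x y : V,
        φ (φ (pN (μ x y))) - φ (pN (μ (φ x) y)) - φ (pN (μ x (φ y)))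
          + pN (μ (φ x) (φ y)) = 0)) ∧
    ((∀ x y : V,
        φ (φ (pN (μ x y))) - φ (pN (μ (φ x) y)) - φ (pN (μ x (φ y)))
          + pN (μ (φ x) (φ y)) = 0) →
      ∀ x y : V,
        Tendsto (fun t : ℝ =>
            (Ring.inverse (φ + t • (1 : Module.End ℝ V)))
              (μ (φ x + t • x) (φ y + t • y)))
          (𝓝[≠] (0 : ℝ))
          (𝓝 (ψ (pR (μ (φ x) (φ y))) + pN (μ (φ x) y) + pN (μ x (φ y))
                - φ (pN (μ x y))))) := by
  classical
  -- decomposition facts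
  have hdec : ∀ v : V, pR v ∈ VR ∧ pN v ∈ VN ∧ pR v + pN v = v := by
    intro v
    have hv : v ∈ VR ⊔ VN := by rw [hcompl.sup_eq_top]; trivial
    obtain ⟨a, ha, b, hb, hab⟩ := Submodule.mem_sup.1 hv
    have h1 : pR v = a := by
      rw [← hab, map_add, hpR a ha, hpR0 b hb, add_zero]
    have h2 : pN v = b := by
      rw [← hab, map_add, hpN0 a ha, hpN b hb, zero_add]
    exact ⟨h1 ▸ ha, h2 ▸ hb, by rw [h1, h2, hab]⟩
  have hmemR : ∀ v, pR v ∈ VR := fun v => (hdec v).1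
  have hmemN : ∀ v, pN v ∈ VN := fun v => (hdec v).2.1
  have hsum : ∀ v, pR v + pN v = v := fun v => (hdec v).2.2
  have hpNN : ∀ v, pN (pN v) = pN v := fun v => hpN _ (hmemN v)
  have hpRR : ∀ v, pR (pR v) = pR v := fun v => hpR _ (hmemR v)
  have hpNφ : ∀ v, pN (φ v) = φ (pN v) := by
    intro v
    conv_lhs => rw [← hsum v]
    rw [map_add, map_add, hpN0 _ (hφR _ (hmemR v)), hpN _ (hφN _ (hmemN v)), zero_add]
  -- ψ' facts
  set ψ' : V →ₗ[ℝ] V := ψ ∘ₗ pR with hψ'def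
  have hψ'R : ∀ v, pR (ψ' v) = ψ' v := fun v => hpR _ (hψ _ (hmemR v)).1
  have hφψ' : ∀ v, φ (ψ' v) = pR v := fun v => (hψ _ (hmemR v)).2
  -- continuous linear map version
  set Ψ : V →L[ℝ] V := LinearMap.toContinuousLinearMap ψ' with hΨdef
  have hΨ : ∀ v, Ψ v = ψ' v := fun v => rfl
  have hcont1 : Continuous fun t : ℝ => (1 + t • Ψ : V →L[ℝ] V) :=
    continuous_const.add (continuous_id.smul continuous_const)
  have hev : ∀ᶠ t : ℝ in 𝓝 (0:ℝ), IsUnit ((1 + t • Ψ : V →L[ℝ] V)) := by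
    have hopen : IsOpen {x : V →L[ℝ] V | IsUnit x} := Units.isOpen
    have h1 : (1 + (0:ℝ) • Ψ : V →L[ℝ] V) = 1 := by simp
    have := hcont1.continuousAt (x := (0:ℝ))
    have hm : {x : V →L[ℝ] V | IsUnit x} ∈ 𝓝 ((1 + (0:ℝ) • Ψ : V →L[ℝ] V)) := by
      rw [h1]; exact hopen.mem_nhds isUnit_one
    exact this.eventually_mem hm
  have hrc_cont : Tendsto (fun t : ℝ => Ring.inverse (1 + t • Ψ : V →L[ℝ] V)) (𝓝 (0:ℝ))
      (𝓝 (1 : V →L[ℝ] V)) := by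
    have h1 : ContinuousAt Ring.inverse ((1 : (V →L[ℝ] V)ˣ) : V →L[ℝ] V) :=
      NormedRing.inverse_continuousAt 1
    have h0 : Tendsto (fun t : ℝ => (1 + t • Ψ : V →L[ℝ] V)) (𝓝 (0:ℝ))
        (𝓝 (1 : V →L[ℝ] V)) := by
      have := hcont1.continuousAt (x := (0:ℝ))
      simpa using this.tendsto
    have h2 := h1.tendsto.comp (by simpa using h0)
    simpa [Function.comp_def] using h2
  -- the nilpotent-part inverse
  set Sop : ℝ → (V →ₗ[ℝ] V) := fun t =>
    t⁻¹ • ∑ i ∈ Finset.range q, (-t⁻¹) ^ i • ((φ ^ i) ∘ₗ pN) with hSopdef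
  have hSop_apply : ∀ (t : ℝ) (v : V),
      Sop t v = t⁻¹ • ∑ i ∈ Finset.range q, (-t⁻¹) ^ i • (φ ^ i) (pN v) := by
    intro t v
    simp [hSopdef, LinearMap.sum_apply]
  have hpow1 : ∀ (i : ℕ) (w : V), (φ ^ (i+1)) w = φ ((φ ^ i) w) := by
    intro i w
    rw [pow_succ']
    rfl
  have hpow2 : ∀ (i : ℕ) (w : V), (φ ^ i) (φ w) = φ ((φ ^ i) w) := by
    intro i w
    have h : (φ ^ i) * φ = φ * (φ ^ i) := pow_mul_comm' φ i
    calc (φ ^ i) (φ w) = ((φ ^ i) * φ) w := rfl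
      _ = (φ * (φ ^ i)) w := by rw [h]
      _ = φ ((φ ^ i) w) := rfl
  have hFS : ∀ (t : ℝ), t ≠ 0 → ∀ v : V, φ (Sop t v) + t • Sop t v = pN v := by
    intro t ht v
    have key : ∀ i : ℕ, t⁻¹ • ((-t⁻¹) ^ i • φ ((φ ^ i) (pN v)))
        = -((-t⁻¹) ^ (i+1) • (φ ^ (i+1)) (pN v)) := by
      intro i
      rw [hpow1, smul_smul, ← neg_smul]
      congr 1
      ring
    have e1 : φ (Sop t v) = ∑ i ∈ Finset.range q, -((-t⁻¹) ^ (i+1) • (φ ^ (i+1)) (pN v)) := by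
      rw [hSop_apply, map_smul, map_sum, Finset.smul_sum]
      refine Finset.sum_congr rfl fun i _ => ?_
      rw [map_smul]
      exact key i
    have e2 : t • Sop t v = ∑ i ∈ Finset.range q, (-t⁻¹) ^ i • (φ ^ i) (pN v) := by
      rw [hSop_apply, smul_smul, mul_inv_cancel₀ ht, one_smul]
    calc φ (Sop t v) + t • Sop t v
        = ∑ i ∈ Finset.range q,
            ((-t⁻¹) ^ i • (φ ^ i) (pN v) - (-t⁻¹) ^ (i+1) • (φ ^ (i+1)) (pN v)) := by
          rw [e1, e2, ← Finset.sum_add_distrib]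
          exact Finset.sum_congr rfl fun i _ => by rw [add_comm, sub_eq_add_neg]
      _ = (-t⁻¹) ^ 0 • (φ ^ 0) (pN v) - (-t⁻¹) ^ q • (φ ^ q) (pN v) :=
          Finset.sum_range_sub' (fun i => (-t⁻¹) ^ i • (φ ^ i) (pN v)) q
      _ = pN v := by simp [hnil _ (hmemN v)]
  have hSφ : ∀ (t : ℝ) (v : V), Sop t (φ v) = φ (Sop t v) := by
    intro t v
    rw [hSop_apply, hSop_apply, hpNφ, map_smul, map_sum]
    congr 1
    refine Finset.sum_congr rfl fun i _ => ?_
    rw [map_smul, hpow2]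
  -- the explicit inverse of φ + t·1
  have hRinv : ∀ t : ℝ, t ≠ 0 → IsUnit ((1 + t • Ψ : V →L[ℝ] V)) →
      Ring.inverse (φ + t • (1 : Module.End ℝ V)) =
        ((ψ' ∘ₗ (((Ring.inverse (1 + t • Ψ) : V →L[ℝ] V) : V →ₗ[ℝ] V) ∘ₗ pR)) + Sop t) := by
    intro t ht hu
    set rc : V →L[ℝ] V := Ring.inverse (1 + t • Ψ) with hrcdef
    have hrc : ∀ w : V, rc w + t • ψ' (rc w) = w := by
      intro w
      have h1 : (1 + t • Ψ) * rc = 1 := Ring.mul_inverse_cancel _ hu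
      have h2 := congrArg (fun f : V →L[ℝ] V => f w) h1
      simp only [ContinuousLinearMap.mul_apply, ContinuousLinearMap.add_apply,
        ContinuousLinearMap.one_apply, ContinuousLinearMap.smul_apply] at h2
      rw [add_comm] at h2
      rw [add_comm]
      simpa [hΨ] using h2
    set G : V →ₗ[ℝ] V := (ψ' ∘ₗ (((rc : V →L[ℝ] V) : V →ₗ[ℝ] V) ∘ₗ pR)) + Sop t with hGdef
    have hFG : ∀ w : V, (φ + t • (1 : Module.End ℝ V)) (G w) = w := by
      intro w
      have h3 : pR (rc (pR w)) + t • ψ' (rc (pR w)) = pR w := by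
        have h := congrArg pR (hrc (pR w))
        rwa [map_add, map_smul, hψ'R, hpRR] at h
      have h4 : (φ + t • (1 : Module.End ℝ V)) (G w)
          = (φ (ψ' (rc (pR w))) + t • ψ' (rc (pR w))) + (φ (Sop t w) + t • Sop t w) := by
        simp only [hGdef, LinearMap.add_apply, LinearMap.smul_apply, Module.End.one_apply,
          LinearMap.comp_apply, ContinuousLinearMap.coe_coe, map_add, smul_add]
      rw [h4, hφψ', h3, hFS t ht w, hsum]
    have hsurj : Function.Surjective (φ + t • (1 : Module.End ℝ V)) := fun w => ⟨G w, hFG w⟩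
    have hinj : Function.Injective (φ + t • (1 : Module.End ℝ V)) :=
      (LinearMap.injective_iff_surjective).2 hsurj
    have hGF : ∀ w : V, G ((φ + t • (1 : Module.End ℝ V)) w) = w := fun w => hinj (hFG _)
    have hmul1 : (φ + t • (1 : Module.End ℝ V)) * G = 1 := LinearMap.ext fun w => hFG w
    have hmul2 : G * (φ + t • (1 : Module.End ℝ V)) = 1 := LinearMap.ext fun w => hGF w
    exact Ring.inverse_unit ⟨φ + t • (1 : Module.End ℝ V), G, hmul1, hmul2⟩
  have hSpN : ∀ (t : ℝ) (v w : V), pN v = pN w → Sop t v = Sop t w := by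
    intro t v w h
    rw [hSop_apply, hSop_apply, h]
  have hSF : ∀ (t : ℝ), t ≠ 0 → ∀ u : V, Sop t (φ u + t • u) = pN u := by
    intro t ht u
    rw [map_add, map_smul, hSφ]
    exact hFS t ht u
  have MAIN : ∀ x y : V, ∃ c : ℝ → V,
      (∀ᶠ t in 𝓝[≠] (0:ℝ),
        Ring.inverse (φ + t • (1 : Module.End ℝ V)) (μ (φ x + t • x) (φ y + t • y))
          = c t + ∑ i ∈ Finset.range q, (t⁻¹) ^ (i+1) •
              ((-1:ℝ) ^ i • (φ ^ i) (φ (φ (pN (μ x y))) - φ (pN (μ (φ x) y))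
                - φ (pN (μ x (φ y))) + pN (μ (φ x) (φ y))))) ∧
      Tendsto c (𝓝 (0:ℝ))
        (𝓝 (ψ (pR (μ (φ x) (φ y))) + pN (μ (φ x) y) + pN (μ x (φ y)) - φ (pN (μ x y)))) := by
    intro x y
    set A' : V := μ (φ x) (φ y) with hA'
    set B' : V := μ (φ x) y + μ x (φ y) with hB'
    set C' : V := μ x y with hC'
    set D : V := φ (φ (pN (μ x y))) - φ (pN (μ (φ x) y)) - φ (pN (μ x (φ y)))
        + pN (μ (φ x) (φ y)) with hDdef
    have hD2 : D = pN A' - φ (pN B') + φ (φ (pN C')) := by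
      rw [hDdef, hA', hB', hC']
      simp only [map_add]
      abel
    have hpND : pN D = D := by
      rw [hD2]
      simp only [map_add, map_sub, hpNφ, hpNN]
    have hM : ∀ t : ℝ, μ (φ x + t • x) (φ y + t • y) = A' + t • B' + (t*t) • C' := by
      intro t
      simp only [map_add, map_smul, LinearMap.add_apply, LinearMap.smul_apply,
        smul_add, smul_smul, hA', hB', hC']
      module
    have hSM : ∀ t : ℝ, t ≠ 0 →
        Sop t (A' + t • B' + (t*t) • C') = Sop t D + (pN B' + (t • pN C' - φ (pN C'))) := by
      intro t ht
      have hv : Sop t (A' + t • B' + (t*t) • C')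
          = Sop t (D + ((φ (pN B') + t • pN B')
              + (t • (φ (pN C') + t • pN C') - φ (φ (pN C') + t • pN C')))) := by
        apply hSpN
        rw [hD2]
        simp only [map_add, map_sub, map_smul, hpNφ, hpNN]
        module
      have h1 : Sop t (φ (pN B') + t • pN B') = pN B' := by
        rw [hSF t ht (pN B'), hpNN]
      have h2 : Sop t (t • (φ (pN C') + t • pN C') - φ (φ (pN C') + t • pN C'))
          = t • pN C' - φ (pN C') := by
        rw [map_sub (Sop t), map_smul (Sop t), hSφ, hSF t ht (pN C'), hpNN]
      calc Sop t (A' + t • B' + (t*t) • C')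
          = Sop t D + Sop t ((φ (pN B') + t • pN B')
              + (t • (φ (pN C') + t • pN C') - φ (φ (pN C') + t • pN C'))) := by
            rw [hv]
            exact map_add (Sop t) D _
        _ = Sop t D + (Sop t (φ (pN B') + t • pN B')
              + Sop t (t • (φ (pN C') + t • pN C') - φ (φ (pN C') + t • pN C'))) := by
            rw [map_add (Sop t) (φ (pN B') + t • pN B')]
        _ = Sop t D + (pN B' + (t • pN C' - φ (pN C'))) := by rw [h1, h2]
    refine ⟨fun t => ψ' ((Ring.inverse (1 + t • Ψ) : V →L[ℝ] V)
        (pR (A' + t • B' + (t*t) • C'))) + (pN B' + (t • pN C' - φ (pN C'))), ?_, ?_⟩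
    · have hev' : ∀ᶠ t in 𝓝[≠] (0:ℝ), IsUnit ((1 + t • Ψ : V →L[ℝ] V)) :=
        hev.filter_mono nhdsWithin_le_nhds
      filter_upwards [hev', self_mem_nhdsWithin] with t hu ht'
      have ht : t ≠ 0 := ht'
      have hSopD : Sop t D = ∑ i ∈ Finset.range q, (t⁻¹) ^ (i+1) •
          ((-1:ℝ) ^ i • (φ ^ i) D) := by
        rw [hSop_apply, hpND, Finset.smul_sum]
        refine Finset.sum_congr rfl fun i _ => ?_
        rw [smul_smul, smul_smul]
        congr 1
        rw [neg_pow, pow_succ]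
        ring
      rw [hM t, hRinv t ht hu, ← hSopD]
      simp only [LinearMap.add_apply, LinearMap.comp_apply, ContinuousLinearMap.coe_coe]
      rw [hSM t ht]
      abel
    · have hw : Tendsto (fun t : ℝ => pR (A' + t • B' + (t*t) • C')) (𝓝 (0:ℝ))
          (𝓝 (pR A')) := by
        have hcontp : Continuous (fun t : ℝ => pR (A' + t • B' + (t*t) • C')) := by
          refine (LinearMap.continuous_of_finiteDimensional pR).comp ?_
          exact (continuous_const.add (continuous_id.smul continuous_const)).add
            ((continuous_id.mul continuous_id).smul continuous_const)
        have := hcontp.continuousAt (x := (0:ℝ)).tendsto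
        simpa using this
      have happly : Tendsto (fun t : ℝ => (Ring.inverse (1 + t • Ψ) : V →L[ℝ] V)
          (pR (A' + t • B' + (t*t) • C'))) (𝓝 (0:ℝ)) (𝓝 (pR A')) := by
        have h2 : Tendsto (fun t : ℝ => ((Ring.inverse (1 + t • Ψ) : V →L[ℝ] V),
            pR (A' + t • B' + (t*t) • C'))) (𝓝 (0:ℝ))
            (𝓝 ((1 : V →L[ℝ] V), pR A')) := hrc_cont.prodMk_nhds hw
        have h3 := (isBoundedBilinearMap_apply.continuous.tendsto
          ((1 : V →L[ℝ] V), pR A')).comp h2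
        exact h3
      have h4 : Tendsto (fun t : ℝ => ψ' ((Ring.inverse (1 + t • Ψ) : V →L[ℝ] V)
          (pR (A' + t • B' + (t*t) • C'))) + (pN B' + (t • pN C' - φ (pN C'))))
          (𝓝 (0:ℝ))
          (𝓝 (ψ' (pR A') + (pN B' + ((0:ℝ) • pN C' - φ (pN C'))))) := by
        refine Tendsto.add ?_ (Tendsto.add tendsto_const_nhds
          (Tendsto.sub ?_ tendsto_const_nhds))
        · exact ((LinearMap.continuous_of_finiteDimensional ψ').tendsto _).comp happly
        · exact (tendsto_id.smul tendsto_const_nhds)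
      have hlimeq : ψ' (pR A') + (pN B' + ((0:ℝ) • pN C' - φ (pN C')))
          = ψ (pR (μ (φ x) (φ y))) + pN (μ (φ x) y) + pN (μ x (φ y)) - φ (pN (μ x y)) := by
        have h5 : ψ' (pR A') = ψ (pR A') := by
          rw [hψ'def, LinearMap.comp_apply, hpRR]
        rw [h5, zero_smul, hA', hB', hC', map_add]
        abel
      rwa [hlimeq] at h4
  have main2 : (∀ x y : V,
      φ (φ (pN (μ x y))) - φ (pN (μ (φ x) y)) - φ (pN (μ x (φ y)))
        + pN (μ (φ x) (φ y)) = 0) →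
      ∀ x y : V,
        Tendsto (fun t : ℝ =>
            (Ring.inverse (φ + t • (1 : Module.End ℝ V)))
              (μ (φ x + t • x) (φ y + t • y)))
          (𝓝[≠] (0 : ℝ))
          (𝓝 (ψ (pR (μ (φ x) (φ y))) + pN (μ (φ x) y) + pN (μ x (φ y))
                - φ (pN (μ x y)))) := by
    intro hcond x y
    obtain ⟨c, hk, hct⟩ := MAIN x y
    have hk' : (fun t : ℝ =>
        Ring.inverse (φ + t • (1 : Module.End ℝ V)) (μ (φ x + t • x) (φ y + t • y)))
          =ᶠ[𝓝[≠] (0:ℝ)] c := by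
      filter_upwards [hk] with t h
      rw [h, hcond x y]
      simp
    exact Tendsto.congr' hk'.symm (hct.mono_left nhdsWithin_le_nhds)
  refine ⟨⟨?_, fun hcond => ⟨_, main2 hcond⟩⟩, main2⟩
  rintro ⟨L, hL⟩ x y
  obtain ⟨c, hk, hct⟩ := MAIN x y
  rcases Nat.eq_zero_or_pos q with hq | hq
  · have hpN0' : ∀ v : V, pN v = 0 := by
      intro v
      have := hnil (pN v) (hmemN v)
      rw [hq] at this
      simpa using this
    simp [hpN0']
  · have h1 : Tendsto (fun t : ℝ => c t + ∑ i ∈ Finset.range q, (t⁻¹) ^ (i+1) •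
        ((-1:ℝ) ^ i • (φ ^ i) (φ (φ (pN (μ x y))) - φ (pN (μ (φ x) y))
          - φ (pN (μ x (φ y))) + pN (μ (φ x) (φ y)))))
        (𝓝[≠] (0:ℝ)) (𝓝 (L x y)) := (hL x y).congr' hk
    have h2 : Tendsto (fun t : ℝ => ∑ i ∈ Finset.range q, (t⁻¹) ^ (i+1) •
        ((-1:ℝ) ^ i • (φ ^ i) (φ (φ (pN (μ x y))) - φ (pN (μ (φ x) y))
          - φ (pN (μ x (φ y))) + pN (μ (φ x) (φ y)))))
        (𝓝[≠] (0:ℝ)) (𝓝 (L x y - (ψ (pR (μ (φ x) (φ y))) + pN (μ (φ x) y)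
          + pN (μ x (φ y)) - φ (pN (μ x y))))) := by
      have h3 := h1.sub (hct.mono_left nhdsWithin_le_nhds)
      have h4 : ∀ t : ℝ, (c t + ∑ i ∈ Finset.range q, (t⁻¹) ^ (i+1) •
          ((-1:ℝ) ^ i • (φ ^ i) (φ (φ (pN (μ x y))) - φ (pN (μ (φ x) y))
            - φ (pN (μ x (φ y))) + pN (μ (φ x) (φ y))))) - c t
          = ∑ i ∈ Finset.range q, (t⁻¹) ^ (i+1) •
          ((-1:ℝ) ^ i • (φ ^ i) (φ (φ (pN (μ x y))) - φ (pN (μ (φ x) y))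
            - φ (pN (μ x (φ y))) + pN (μ (φ x) (φ y)))) := fun t => by abel
      exact Tendsto.congr h4 h3
    have h5 := aux_inv_limit q _ _ h2 0 hq
    simpa using h5
end
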